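/- arXiv:2004.11494 — 6 statements merged into one kernel-verified Lean document; each statement's English description precedes it below -/
import Mathlib

section
/- Let p ≥ 1, W ∈ ℝ^{p×p} with all entries positive, ε > 0, and let 𝒢 be a partition of {1,…,p}×{1,…,p} into groups. Let S ⊆ {1,…,p}×{1,…,p} and suppose every group g ∈ 𝒢 satisfies g ⊆ S or g ⊆ Sᶜ. If u_e, u_g ∈ ℝ^{p×p} are supported on S (all entries with index outside S are zero) and v_e, v_g ∈ ℝ^{p×p} are supported on Sᶜ, then ‖W ∘ (u_e + v_e)‖₁ + ε‖u_g + v_g‖_{𝒢,2} = (‖W ∘ u_e‖₁ + ε‖u_g‖_{𝒢,2}) + (‖W ∘ v_e‖₁ + ε‖v_g‖_{𝒢,2}). In particular the kEV norm is decomposable with respect to the subspace M(S) = {θ ∈ ℝ^{p×p} : θ_{ij} = 0 for (i,j) ∉ S} and its orthogonal complement. -/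
open Finset

/-- The weighted ℓ1 function `‖W ∘ X‖₁ = Σ_{i,j} |W_{ij} X_{ij}|`. -/
def weightedL1 {p : ℕ} (W X : Matrix (Fin p) (Fin p) ℝ) : ℝ :=
  ∑ i, ∑ j, |W i j * X i j|

/-- The group (1,2)-norm `‖X‖_{𝒢,2} = Σ_{g ∈ 𝒢} ‖X_g‖₂`, with the partition 𝒢 encoded by
the group-assignment map `gr`. -/
noncomputable def groupNorm {p : ℕ} {ι : Type*} [Fintype ι] [DecidableEq ι]
    (gr : Fin p × Fin p → ι) (X : Matrix (Fin p) (Fin p) ℝ) : ℝ :=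
  ∑ k, Real.sqrt (∑ ij ∈ Finset.univ.filter (fun ij => gr ij = k), (X ij.1 ij.2) ^ 2)

/-- Decomposability of the kEV norm: if every group lies inside `S` or inside `Sᶜ`,
`u_e, u_g` are supported on `S` and `v_e, v_g` are supported on `Sᶜ`, then
`‖W ∘ (u_e + v_e)‖₁ + ε‖u_g + v_g‖_{𝒢,2}
  = (‖W ∘ u_e‖₁ + ε‖u_g‖_{𝒢,2}) + (‖W ∘ v_e‖₁ + ε‖v_g‖_{𝒢,2})`. -/
theorem stmt2 (p : ℕ) (hp : 1 ≤ p) {ι : Type*} [Fintype ι] [DecidableEq ι]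
    (W : Matrix (Fin p) (Fin p) ℝ) (hW : ∀ i j, 0 < W i j)
    (ε : ℝ) (hε : 0 < ε)
    (gr : Fin p × Fin p → ι)
    (S : Finset (Fin p × Fin p))
    (hgroups : ∀ k : ι, (∀ ij, gr ij = k → ij ∈ S) ∨ (∀ ij, gr ij = k → ij ∉ S))
    (ue ug ve vg : Matrix (Fin p) (Fin p) ℝ)
    (hue : ∀ ij : Fin p × Fin p, ij ∉ S → ue ij.1 ij.2 = 0)
    (hug : ∀ ij : Fin p × Fin p, ij ∉ S → ug ij.1 ij.2 = 0)
    (hve : ∀ ij : Fin p × Fin p, ij ∈ S → ve ij.1 ij.2 = 0)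
    (hvg : ∀ ij : Fin p × Fin p, ij ∈ S → vg ij.1 ij.2 = 0) :
    weightedL1 W (ue + ve) + ε * groupNorm gr (ug + vg) =
      (weightedL1 W ue + ε * groupNorm gr ug) +
      (weightedL1 W ve + ε * groupNorm gr vg) := by

  have hL1 : weightedL1 W (ue + ve) = weightedL1 W ue + weightedL1 W ve := by
    unfold weightedL1
    rw [← Finset.sum_add_distrib]
    refine Finset.sum_congr rfl fun i _ => ?_
    rw [← Finset.sum_add_distrib]
    refine Finset.sum_congr rfl fun j _ => ?_
    by_cases h : (i, j) ∈ S
    · simp [Matrix.add_apply, hve (i, j) h]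
    · simp [Matrix.add_apply, hue (i, j) h]
  have hG : groupNorm gr (ug + vg) = groupNorm gr ug + groupNorm gr vg := by
    unfold groupNorm
    rw [← Finset.sum_add_distrib]
    refine Finset.sum_congr rfl fun k _ => ?_
    rcases hgroups k with h | h
    · have hv0 : ∀ ij ∈ Finset.univ.filter (fun ij => gr ij = k),
          (vg ij.1 ij.2) ^ 2 = 0 := by
        intro ij hij
        simp only [Finset.mem_filter] at hij
        rw [hvg ij (h ij hij.2)]; ring
      have h1 : ∑ ij ∈ Finset.univ.filter (fun ij => gr ij = k),
          ((ug + vg) ij.1 ij.2) ^ 2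
          = ∑ ij ∈ Finset.univ.filter (fun ij => gr ij = k), (ug ij.1 ij.2) ^ 2 := by
        refine Finset.sum_congr rfl fun ij hij => ?_
        simp only [Finset.mem_filter] at hij
        simp [Matrix.add_apply, hvg ij (h ij hij.2)]
      rw [h1, Finset.sum_eq_zero hv0, Real.sqrt_zero, add_zero]
    · have h1 : ∑ ij ∈ Finset.univ.filter (fun ij => gr ij = k),
          ((ug + vg) ij.1 ij.2) ^ 2
          = ∑ ij ∈ Finset.univ.filter (fun ij => gr ij = k), (vg ij.1 ij.2) ^ 2 := by
        refine Finset.sum_congr rfl fun ij hij => ?_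
        simp only [Finset.mem_filter] at hij
        simp [Matrix.add_apply, hug ij (h ij hij.2)]
      have hu0 : ∑ ij ∈ Finset.univ.filter (fun ij => gr ij = k),
          (ug ij.1 ij.2) ^ 2 = 0 := by
        refine Finset.sum_eq_zero fun ij hij => ?_
        simp only [Finset.mem_filter] at hij
        rw [hug ij (h ij hij.2)]; ring
      rw [h1, hu0, Real.sqrt_zero, zero_add]
  rw [hL1, hG]; ring
end

section
/- Let E be a finite-dimensional real inner product space, M ⊆ E a subspace, and R a norm on E that is decomposable with respect to (M, M⊥), i.e. R(u + v) = R(u) + R(v) for all u ∈ M, v ∈ M⊥. Let θ* ∈ M and θ̂ ∈ E satisfy R(θ̂) ≤ R(θ*), and set δ = θ̂ − θ*. Then R(Π_{M⊥}(δ)) ≤ R(Π_M(δ)), where Π_M and Π_{M⊥} denote the orthogonal projections onto M and M⊥. -/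
/-!
Split `δ = u + v` with `u ∈ M`, `v ∈ M⊥`, so `θ̂ = (θ* + u) + v` with `θ* + u ∈ M`.
Decomposability gives `R(θ̂) = R(θ* + u) + R(v)`, and the triangle inequality gives
`R(θ*) ≤ R(θ* + u) + R(u)`; comparing with `R(θ̂) ≤ R(θ*)` yields `R(v) ≤ R(u)`.
-/

/-- A function `R : E → ℝ` is a norm: absolutely homogeneous, subadditive, nonnegative,
and definite. -/
def IsNormOn {E : Type*} [NormedAddCommGroup E] [InnerProductSpace ℝ E]
    (R : E → ℝ) : Prop :=
  (∀ (a : ℝ) (x : E), R (a • x) = |a| * R x) ∧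
  (∀ x y : E, R (x + y) ≤ R x + R y) ∧
  (∀ x : E, 0 ≤ R x) ∧
  (∀ x : E, R x = 0 → x = 0)

theorem le_of_map_add_add_le {G : Type*} [AddGroup G] {R : G → ℝ}
    (hneg : ∀ x, R (-x) = R x) (hadd : ∀ x y, R (x + y) ≤ R x + R y) {a u v : G}
    (hsplit : R (a + u + v) = R (a + u) + R v) (hle : R (a + u + v) ≤ R a) :
    R v ≤ R u := by
  have htri : R a ≤ R (a + u) + R u := by
    simpa [hneg] using hadd (a + u) (-u)
  linarith

theorem IsNormOn.map_neg {E : Type*} [NormedAddCommGroup E] [InnerProductSpace ℝ E]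
    {R : E → ℝ} (hR : IsNormOn R) (x : E) : R (-x) = R x := by
  simpa using hR.1 (-1) x

/-- If `R` is a norm on a finite-dimensional real inner product space `E`, decomposable
w.r.t. `(M, M⊥)`, `θ* ∈ M` and `R(θ̂) ≤ R(θ*)`, then with `δ = θ̂ − θ*` one has
`R(Π_{M⊥} δ) ≤ R(Π_M δ)`. -/
theorem stmt6 {E : Type*} [NormedAddCommGroup E] [InnerProductSpace ℝ E]
    [FiniteDimensional ℝ E]
    (M : Submodule ℝ E) (R : E → ℝ) (hR : IsNormOn R)
    (hdecomp : ∀ u ∈ M, ∀ v ∈ Mᗮ, R (u + v) = R u + R v)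
    (θstar θhat : E) (hθstar : θstar ∈ M) (hle : R θhat ≤ R θstar) :
    R (Submodule.orthogonalProjection Mᗮ (θhat - θstar) : E) ≤
      R (Submodule.orthogonalProjection M (θhat - θstar) : E) := by
  set u : M := Submodule.orthogonalProjection M (θhat - θstar)
  set v : Mᗮ := Submodule.orthogonalProjection Mᗮ (θhat - θstar)
  have hsum : (u + v : E) = θhat - θstar := M.starProjection_add_starProjection_orthogonal _
  have hθhat : θhat = θstar + u + v := by rw [add_assoc, hsum, add_sub_cancel]
  rw [hθhat] at hle
  exact le_of_map_add_add_le hR.map_neg hR.2.1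
    (hdecomp _ (M.add_mem hθstar u.2) _ v.2) hle
end

section
/- Let E be a finite-dimensional real inner product space, M ⊆ E a nonzero subspace, and R a norm on E decomposable with respect to (M, M⊥). Let R*(v) = sup_{R(u) ≤ 1} ⟨u, v⟩ be its dual norm and Ψ = sup{ R(u)/‖u‖ : u ∈ M, u ≠ 0 } the subspace compatibility constant. Let θ* ∈ M, let θ̂_n ∈ E, let λ > 0 satisfy λ ≥ R*(θ̂_n − θ*), and let θ̂ be a minimizer of R over the set { θ ∈ E : R*(θ − θ̂_n) ≤ λ }. Then: (i) R*(θ̂ − θ*) ≤ 2λ; (ii) ‖θ̂ − θ*‖ ≤ 4λΨ; (iii) R(θ̂ − θ*) ≤ 8λΨ². -/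
open scoped RealInnerProductSpace

section

variable {E : Type*} [NormedAddCommGroup E] [InnerProductSpace ℝ E]

noncomputable def dualNorm (R : E → ℝ) (v : E) : ℝ :=
  sSup {r : ℝ | ∃ u : E, R u ≤ 1 ∧ r = ⟪u, v⟫}

def IsDecomposable (R : E → ℝ) (M : Submodule ℝ E) : Prop :=
  ∀ u ∈ M, ∀ v ∈ Mᗮ, R (u + v) = R u + R v

noncomputable def compatibilityConst (R : E → ℝ) (M : Submodule ℝ E) : ℝ :=
  sSup {r : ℝ | ∃ u : E, u ∈ M ∧ u ≠ 0 ∧ r = R u / ‖u‖}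

namespace IsNormOn

variable {R : E → ℝ}

theorem map_smul (hR : IsNormOn R) (a : ℝ) (x : E) : R (a • x) = |a| * R x := hR.1 a x

theorem map_add_le (hR : IsNormOn R) (x y : E) : R (x + y) ≤ R x + R y := hR.2.1 x y

theorem nonneg (hR : IsNormOn R) (x : E) : 0 ≤ R x := hR.2.2.1 x

theorem map_zero (hR : IsNormOn R) : R 0 = 0 := by simpa using hR.map_smul 0 0

theorem map_neg_s7 (hR : IsNormOn R) (x : E) : R (-x) = R x := by simpa using hR.map_smul (-1) x

theorem pos (hR : IsNormOn R) {x : E} (hx : x ≠ 0) : 0 < R x :=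
  (hR.nonneg x).lt_of_ne' fun h => hx (hR.2.2.2 x h)

theorem convexOn (hR : IsNormOn R) : ConvexOn ℝ Set.univ R := by
  refine ⟨convex_univ, fun x _ y _ a b ha hb _ => ?_⟩
  calc R (a • x + b • y) ≤ R (a • x) + R (b • y) := hR.map_add_le _ _
    _ = a • R x + b • R y := by
      rw [hR.map_smul, hR.map_smul, abs_of_nonneg ha, abs_of_nonneg hb, smul_eq_mul, smul_eq_mul]

theorem continuous [FiniteDimensional ℝ E] (hR : IsNormOn R) : Continuous R :=
  continuousOn_univ.mp (hR.convexOn.continuousOn isOpen_univ)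

theorem norm_mul_map_normalize (hR : IsNormOn R) (x : E) : ‖x‖ * R (‖x‖⁻¹ • x) = R x := by
  rcases eq_or_ne x 0 with rfl | hx
  · simp [hR.map_zero]
  · rw [hR.map_smul, abs_inv, abs_norm, ← mul_assoc, mul_inv_cancel₀ (norm_ne_zero_iff.mpr hx),
      one_mul]

theorem exists_le_mul_norm [FiniteDimensional ℝ E] (hR : IsNormOn R) :
    ∃ C, ∀ x : E, R x ≤ C * ‖x‖ := by
  cases subsingleton_or_nontrivial E
  · exact ⟨0, fun x => by simp [Subsingleton.elim x 0, hR.map_zero]⟩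
  obtain ⟨z, -, hz⟩ := (isCompact_sphere (0 : E) 1).exists_isMaxOn
    (NormedSpace.sphere_nonempty.mpr zero_le_one) hR.continuous.continuousOn
  refine ⟨R z, fun x => ?_⟩
  rcases eq_or_ne x 0 with rfl | hx
  · simp [hR.map_zero]
  · rw [← hR.norm_mul_map_normalize x, mul_comm (R z)]
    exact mul_le_mul_of_nonneg_left (hz (by simp [norm_smul, hx])) (norm_nonneg x)

theorem exists_pos_mul_norm_le [FiniteDimensional ℝ E] (hR : IsNormOn R) :
    ∃ c > 0, ∀ x : E, c * ‖x‖ ≤ R x := by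
  cases subsingleton_or_nontrivial E
  · exact ⟨1, one_pos, fun x => by simp [Subsingleton.elim x 0, hR.map_zero]⟩
  obtain ⟨z, hz1, hz⟩ := (isCompact_sphere (0 : E) 1).exists_isMinOn
    (NormedSpace.sphere_nonempty.mpr zero_le_one) hR.continuous.continuousOn
  have hz0 : z ≠ 0 := ne_zero_of_mem_unit_sphere ⟨z, hz1⟩
  refine ⟨R z, hR.pos hz0, fun x => ?_⟩
  rcases eq_or_ne x 0 with rfl | hx
  · simp [hR.map_zero]
  · rw [← hR.norm_mul_map_normalize x, mul_comm (R z)]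
    exact mul_le_mul_of_nonneg_left (hz (by simp [norm_smul, hx])) (norm_nonneg x)

theorem bddAbove_inner_unitBall [FiniteDimensional ℝ E] (hR : IsNormOn R) (v : E) :
    BddAbove {r : ℝ | ∃ u : E, R u ≤ 1 ∧ r = ⟪u, v⟫} := by
  obtain ⟨c, hc, hcR⟩ := hR.exists_pos_mul_norm_le
  refine ⟨‖v‖ / c, ?_⟩
  rintro r ⟨u, hu, rfl⟩
  rw [le_div_iff₀ hc]
  calc ⟪u, v⟫ * c ≤ ‖u‖ * ‖v‖ * c := by gcongr; exact real_inner_le_norm u v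
    _ = c * ‖u‖ * ‖v‖ := by ring
    _ ≤ 1 * ‖v‖ := by gcongr; exact (hcR u).trans hu
    _ = ‖v‖ := one_mul _

theorem le_dualNorm [FiniteDimensional ℝ E] (hR : IsNormOn R) {u : E} (hu : R u ≤ 1) (v : E) :
    ⟪u, v⟫ ≤ dualNorm R v :=
  le_csSup (hR.bddAbove_inner_unitBall v) ⟨u, hu, rfl⟩

theorem dualNorm_nonneg [FiniteDimensional ℝ E] (hR : IsNormOn R) (v : E) : 0 ≤ dualNorm R v := by
  simpa using hR.le_dualNorm (u := 0) (by simp [hR.map_zero]) v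

theorem inner_le_mul_dualNorm [FiniteDimensional ℝ E] (hR : IsNormOn R) (u v : E) :
    ⟪u, v⟫ ≤ R u * dualNorm R v := by
  rcases eq_or_ne u 0 with rfl | hu
  · simp [hR.map_zero]
  have hRu := hR.pos hu
  have hunit : R ((R u)⁻¹ • u) ≤ 1 := by
    rw [hR.map_smul, abs_inv, abs_of_pos hRu, inv_mul_cancel₀ hRu.ne']
  have h := hR.le_dualNorm hunit v
  rwa [real_inner_smul_left, inv_mul_le_iff₀ hRu] at h

theorem dualNorm_add_le [FiniteDimensional ℝ E] (hR : IsNormOn R) (v w : E) :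
    dualNorm R (v + w) ≤ dualNorm R v + dualNorm R w := by
  refine csSup_le ⟨0, 0, by simp [hR.map_zero], by simp⟩ ?_
  rintro r ⟨u, hu, rfl⟩
  rw [inner_add_right]
  exact add_le_add (hR.le_dualNorm hu v) (hR.le_dualNorm hu w)

theorem dualNorm_neg (hR : IsNormOn R) (v : E) : dualNorm R (-v) = dualNorm R v := by
  unfold dualNorm
  congr 1
  ext r
  constructor <;>
  · rintro ⟨u, hu, rfl⟩
    exact ⟨-u, by rwa [hR.map_neg_s7], by simp⟩

theorem dualNorm_sub_comm (hR : IsNormOn R) (x y : E) :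
    dualNorm R (x - y) = dualNorm R (y - x) := by
  rw [← neg_sub, hR.dualNorm_neg]

theorem compatibilityConst_nonneg (hR : IsNormOn R) (M : Submodule ℝ E) :
    0 ≤ compatibilityConst R M :=
  Real.sSup_nonneg fun _ ⟨u, _, _, hr⟩ => hr ▸ div_nonneg (hR.nonneg u) (norm_nonneg u)

theorem map_le_compatibilityConst_mul_norm [FiniteDimensional ℝ E] (hR : IsNormOn R)
    {M : Submodule ℝ E} {u : E} (hu : u ∈ M) : R u ≤ compatibilityConst R M * ‖u‖ := by
  rcases eq_or_ne u 0 with rfl | hu0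
  · simp [hR.map_zero]
  obtain ⟨C, hC⟩ := hR.exists_le_mul_norm
  have hbdd : BddAbove {r : ℝ | ∃ u : E, u ∈ M ∧ u ≠ 0 ∧ r = R u / ‖u‖} := by
    refine ⟨C, ?_⟩
    rintro r ⟨w, -, hw, rfl⟩
    exact (div_le_iff₀ (norm_pos_iff.mpr hw)).mpr (hC w)
  exact (div_le_iff₀ (norm_pos_iff.mpr hu0)).mp (le_csSup hbdd ⟨u, hu, hu0, rfl⟩)

theorem map_sub_le_two_mul_starProjection (hR : IsNormOn R) {M : Submodule ℝ E}
    [M.HasOrthogonalProjection] (hdecomp : IsDecomposable R M) {θ θ' : E} (hθ' : θ' ∈ M)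
    (hle : R θ ≤ R θ') : R (θ - θ') ≤ 2 * R (M.starProjection (θ - θ')) := by
  set u := M.starProjection (θ - θ')
  set v := θ - θ' - u
  have hsplit : R θ = R (θ' + u) + R v := by
    rw [← hdecomp _ (M.add_mem hθ' (M.starProjection_apply_mem _)) _
      (M.sub_starProjection_mem_orthogonal _)]
    congr 1
    abel
  have htri : R θ' ≤ R (θ' + u) + R u := by
    simpa [hR.map_neg_s7] using hR.map_add_le (θ' + u) (-u)
  calc R (θ - θ') = R (u + v) := by rw [add_sub_cancel]
    _ ≤ R u + R v := hR.map_add_le u v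
    _ ≤ 2 * R u := by linarith

theorem map_sub_le_two_mul_compatibilityConst_mul_norm [FiniteDimensional ℝ E]
    (hR : IsNormOn R) {M : Submodule ℝ E} (hdecomp : IsDecomposable R M) {θ θ' : E}
    (hθ' : θ' ∈ M) (hle : R θ ≤ R θ') :
    R (θ - θ') ≤ 2 * compatibilityConst R M * ‖θ - θ'‖ := calc
  R (θ - θ') ≤ 2 * R (M.starProjection (θ - θ')) :=
    hR.map_sub_le_two_mul_starProjection hdecomp hθ' hle
  _ ≤ 2 * (compatibilityConst R M * ‖M.starProjection (θ - θ')‖) := by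
    gcongr; exact hR.map_le_compatibilityConst_mul_norm (M.starProjection_apply_mem _)
  _ ≤ 2 * (compatibilityConst R M * ‖θ - θ'‖) := by
    gcongr
    · exact hR.compatibilityConst_nonneg M
    · exact M.norm_starProjection_apply_le _
  _ = 2 * compatibilityConst R M * ‖θ - θ'‖ := by ring

end IsNormOn

end

theorem stmt7_general {E : Type*} [NormedAddCommGroup E] [InnerProductSpace ℝ E]
    [FiniteDimensional ℝ E]
    (M : Submodule ℝ E)
    (R : E → ℝ) (hR : IsNormOn R)
    (hdecomp : ∀ u ∈ M, ∀ v ∈ Mᗮ, R (u + v) = R u + R v)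
    (Rstar : E → ℝ)
    (hRstar : ∀ v : E, Rstar v = sSup {r : ℝ | ∃ u : E, R u ≤ 1 ∧ r = ⟪u, v⟫})
    (Ψ : ℝ) (hΨ : Ψ = sSup {r : ℝ | ∃ u : E, u ∈ M ∧ u ≠ 0 ∧ r = R u / ‖u‖})
    (θstar : E) (hθstar : θstar ∈ M)
    (θn : E) (lam : ℝ) (hlam2 : Rstar (θn - θstar) ≤ lam)
    (θhat : E) (hfeas : Rstar (θhat - θn) ≤ lam)
    (hmin : ∀ θ : E, Rstar (θ - θn) ≤ lam → R θhat ≤ R θ) :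
    Rstar (θhat - θstar) ≤ 2 * lam ∧
    ‖θhat - θstar‖ ≤ 4 * lam * Ψ ∧
    R (θhat - θstar) ≤ 8 * lam * Ψ ^ 2 := by
  obtain rfl : Rstar = dualNorm R := funext hRstar
  obtain rfl : Ψ = compatibilityConst R M := hΨ
  set Ψ := compatibilityConst R M
  set Δ := θhat - θstar
  have hΨ0 := hR.compatibilityConst_nonneg M
  have hlam0 : 0 ≤ lam := (hR.dualNorm_nonneg _).trans hlam2
  have hi : dualNorm R Δ ≤ 2 * lam := calc
    dualNorm R Δ = dualNorm R ((θhat - θn) + (θn - θstar)) := by rw [sub_add_sub_cancel]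
    _ ≤ lam + lam := (hR.dualNorm_add_le _ _).trans (add_le_add hfeas hlam2)
    _ = 2 * lam := by ring
  have hRΔ : R Δ ≤ 2 * Ψ * ‖Δ‖ :=
    hR.map_sub_le_two_mul_compatibilityConst_mul_norm hdecomp hθstar
      (hmin θstar (by rwa [hR.dualNorm_sub_comm]))
  have hii : ‖Δ‖ ≤ 4 * lam * Ψ := by
    have hsq : ‖Δ‖ ^ 2 ≤ 4 * lam * Ψ * ‖Δ‖ := calc
      ‖Δ‖ ^ 2 = ⟪Δ, Δ⟫ := (real_inner_self_eq_norm_sq Δ).symm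
      _ ≤ R Δ * dualNorm R Δ := hR.inner_le_mul_dualNorm Δ Δ
      _ ≤ (2 * Ψ * ‖Δ‖) * (2 * lam) :=
        mul_le_mul hRΔ hi (hR.dualNorm_nonneg Δ) (by positivity)
      _ = 4 * lam * Ψ * ‖Δ‖ := by ring
    nlinarith [norm_nonneg Δ, mul_nonneg hlam0 hΨ0]
  refine ⟨hi, hii, ?_⟩
  calc R Δ ≤ 2 * Ψ * ‖Δ‖ := hRΔ
    _ ≤ 2 * Ψ * (4 * lam * Ψ) := by gcongr
    _ = 8 * lam * Ψ ^ 2 := by ring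

/-- Error bounds for the elementary estimator: if `R` is a norm decomposable w.r.t. the
nonzero subspace `M` and its orthogonal complement, `R*` is its dual norm, `Ψ` the
subspace compatibility constant of `M`, `θ* ∈ M`, `λ ≥ R*(θ̂_n − θ*)`, and `θ̂` minimizes
`R` over `{θ : R*(θ − θ̂_n) ≤ λ}`, then
(i) `R*(θ̂ − θ*) ≤ 2λ`, (ii) `‖θ̂ − θ*‖ ≤ 4λΨ`, (iii) `R(θ̂ − θ*) ≤ 8λΨ²`. -/
theorem stmt7 {E : Type*} [NormedAddCommGroup E] [InnerProductSpace ℝ E]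
    [FiniteDimensional ℝ E]
    (M : Submodule ℝ E) (hM : M ≠ ⊥)
    (R : E → ℝ) (hR : IsNormOn R)
    (hdecomp : ∀ u ∈ M, ∀ v ∈ Mᗮ, R (u + v) = R u + R v)
    (Rstar : E → ℝ)
    (hRstar : ∀ v : E, Rstar v = sSup {r : ℝ | ∃ u : E, R u ≤ 1 ∧ r = ⟪u, v⟫})
    (Ψ : ℝ) (hΨ : Ψ = sSup {r : ℝ | ∃ u : E, u ∈ M ∧ u ≠ 0 ∧ r = R u / ‖u‖})
    (θstar : E) (hθstar : θstar ∈ M)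
    (θn : E) (lam : ℝ) (hlam : 0 < lam) (hlam2 : Rstar (θn - θstar) ≤ lam)
    (θhat : E) (hfeas : Rstar (θhat - θn) ≤ lam)
    (hmin : ∀ θ : E, Rstar (θ - θn) ≤ lam → R θhat ≤ R θ) :
    Rstar (θhat - θstar) ≤ 2 * lam ∧
    ‖θhat - θstar‖ ≤ 4 * lam * Ψ ∧
    R (θhat - θstar) ≤ 8 * lam * Ψ ^ 2 :=
  stmt7_general M R hR hdecomp Rstar hRstar Ψ hΨ θstar hθstar θn lam hlam2 θhat hfeas hmin
end

section
/- Let n ≥ 1, let 𝒢 be a partition of {1,…,n} into nonempty groups, let T ⊆ 𝒢 be a nonempty collection of s_G groups, and let M = { u ∈ ℝⁿ : u_g = 0 for every group g ∉ T }. Then sup{ ‖u‖_{𝒢,2} / ‖u‖₂ : u ∈ M, u ≠ 0 } = √(s_G); i.e. the subspace compatibility constant of the group (1,2)-norm with respect to the subspace of vectors supported on the s_G groups in T equals √(s_G). -/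
open Finset

/-- The group (1,2)-norm on ℝⁿ: `‖u‖_{𝒢,2} = Σ_{g ∈ 𝒢} ‖u_g‖₂`, with the partition 𝒢
of `{1,…,n}` encoded by the group-assignment map `gr`. -/
noncomputable def groupNormV {n : ℕ} {ι : Type*} [Fintype ι] [DecidableEq ι]
    (gr : Fin n → ι) (u : Fin n → ℝ) : ℝ :=
  ∑ k, Real.sqrt (∑ i ∈ Finset.univ.filter (fun i => gr i = k), (u i) ^ 2)

/-- The subspace compatibility constant of the group (1,2)-norm with respect to the
subspace of vectors supported on the `s_G` groups in `T` equals `√(s_G)`: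
`sup { ‖u‖_{𝒢,2}/‖u‖₂ : u ∈ M, u ≠ 0 } = √(s_G)`. -/
theorem stmt9 (n : ℕ) (hn : 1 ≤ n) {ι : Type*} [Fintype ι] [DecidableEq ι]
    (gr : Fin n → ι) (hgr : Function.Surjective gr)
    (T : Finset ι) (hT : T.Nonempty) (sG : ℕ) (hsG : sG = T.card) :
    sSup {r : ℝ | ∃ u : Fin n → ℝ, (∀ i : Fin n, gr i ∉ T → u i = 0) ∧ u ≠ 0 ∧
        r = groupNormV gr u / Real.sqrt (∑ i, (u i) ^ 2)} = Real.sqrt sG := by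
  obtain ⟨f, hf⟩ := hgr.hasRightInverse
  have hsG1 : 0 < sG := by rw [hsG]; exact hT.card_pos
  have hsGpos : (0:ℝ) < (sG:ℝ) := by exact_mod_cast hsG1
  -- Upper bound: every element of the set is ≤ √sG
  have hbd : ∀ r ∈ {r : ℝ | ∃ u : Fin n → ℝ, (∀ i : Fin n, gr i ∉ T → u i = 0) ∧ u ≠ 0 ∧
      r = groupNormV gr u / Real.sqrt (∑ i, (u i) ^ 2)}, r ≤ Real.sqrt sG := by
    rintro r ⟨u, hu0, hune, rfl⟩
    set Q := ∑ i, (u i) ^ 2 with hQ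
    have hQpos : 0 < Q := by
      obtain ⟨i, hi⟩ := Function.ne_iff.mp hune
      exact Finset.sum_pos' (fun j _ => sq_nonneg _)
        ⟨i, Finset.mem_univ i, pow_pos (abs_pos.mpr hi) 2 |>.trans_eq (sq_abs _)⟩
    have hfib : ∑ k, ∑ i ∈ Finset.univ.filter (fun i => gr i = k), (u i) ^ 2 = Q := by
      rw [hQ]; exact Finset.sum_fiberwise _ _ _
    have hGsum : groupNormV gr u
        = ∑ k ∈ T, Real.sqrt (∑ i ∈ Finset.univ.filter (fun i => gr i = k), (u i) ^ 2) := by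
      unfold groupNormV
      rw [← Finset.sum_subset (Finset.subset_univ T)]
      intro k _ hk
      have hz : ∑ i ∈ Finset.univ.filter (fun i => gr i = k), (u i) ^ 2 = 0 := by
        apply Finset.sum_eq_zero
        intro i hi
        simp only [Finset.mem_filter] at hi
        rw [hu0 i (by rw [hi.2]; exact hk)]
        ring
      rw [hz, Real.sqrt_zero]
    have hsub : ∑ k ∈ T, (∑ i ∈ Finset.univ.filter (fun i => gr i = k), (u i) ^ 2) ≤ Q := by
      rw [← hfib]
      exact Finset.sum_le_sum_of_subset_of_nonneg (Finset.subset_univ T)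
        (fun k _ _ => Finset.sum_nonneg fun i _ => sq_nonneg _)
    have key : groupNormV gr u ≤ Real.sqrt sG * Real.sqrt Q := by
      rw [hGsum, ← Real.sqrt_mul hsGpos.le]
      rw [Real.le_sqrt (by positivity) (by positivity)]
      calc (∑ k ∈ T, Real.sqrt (∑ i ∈ Finset.univ.filter (fun i => gr i = k), (u i) ^ 2)) ^ 2
          ≤ T.card * ∑ k ∈ T,
              (Real.sqrt (∑ i ∈ Finset.univ.filter (fun i => gr i = k), (u i) ^ 2)) ^ 2 :=
            sq_sum_le_card_mul_sum_sq
        _ = sG * ∑ k ∈ T, (∑ i ∈ Finset.univ.filter (fun i => gr i = k), (u i) ^ 2) := by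
            rw [hsG]
            congr 1
            apply Finset.sum_congr rfl
            intro k _
            exact Real.sq_sqrt (Finset.sum_nonneg fun i _ => sq_nonneg _)
        _ ≤ (sG:ℝ) * Q := by
            exact mul_le_mul_of_nonneg_left hsub hsGpos.le
    rw [div_le_iff₀ (Real.sqrt_pos.mpr hQpos)]
    exact key
  -- Witness attaining √sG
  classical
  set u : Fin n → ℝ := fun i => if gr i ∈ T ∧ i = f (gr i) then 1 else 0 with hu
  have hSk : ∀ k : ι, ∑ i ∈ Finset.univ.filter (fun i => gr i = k), (u i) ^ 2
      = if k ∈ T then 1 else 0 := by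
    intro k
    have hcong : ∀ i ∈ Finset.univ.filter (fun i => gr i = k),
        (u i) ^ 2 = if i = f k then (if k ∈ T then 1 else 0) else 0 := by
      intro i hi
      simp only [Finset.mem_filter] at hi
      rw [hu]
      simp only [hi.2]
      by_cases h1 : k ∈ T <;> by_cases h2 : i = f k <;> simp [h1, h2]
    rw [Finset.sum_congr rfl hcong, Finset.sum_ite_eq']
    simp [hf k]
  have hQ0 : ∑ i, (u i) ^ 2 = (sG:ℝ) := by
    rw [← Finset.sum_fiberwise Finset.univ gr (fun i => (u i) ^ 2)]
    simp only [hSk]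
    rw [Finset.sum_ite_mem, Finset.univ_inter, Finset.sum_const, nsmul_eq_mul, mul_one, hsG]
  have hG0 : groupNormV gr u = (sG:ℝ) := by
    unfold groupNormV
    have : ∀ k : ι, Real.sqrt (∑ i ∈ Finset.univ.filter (fun i => gr i = k), (u i) ^ 2)
        = if k ∈ T then 1 else 0 := by
      intro k
      rw [hSk k]
      by_cases h : k ∈ T <;> simp [h]
    simp only [this]
    rw [Finset.sum_ite_mem, Finset.univ_inter, Finset.sum_const, nsmul_eq_mul, mul_one, hsG]
  have hune : u ≠ 0 := by
    obtain ⟨t, ht⟩ := hT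
    intro h
    have h1 : u (f t) = 1 := by
      rw [hu]
      simp [hf t, ht]
    rw [h] at h1
    simp at h1
  have hmem : Real.sqrt sG ∈ {r : ℝ | ∃ u : Fin n → ℝ, (∀ i : Fin n, gr i ∉ T → u i = 0) ∧
      u ≠ 0 ∧ r = groupNormV gr u / Real.sqrt (∑ i, (u i) ^ 2)} := by
    refine ⟨u, ?_, hune, ?_⟩
    · intro i hi
      rw [hu]
      simp [hi]
    · rw [hG0, hQ0, Real.div_sqrt]
  refine le_antisymm (Real.sSup_le hbd (Real.sqrt_nonneg _)) ?_
  exact le_csSup ⟨Real.sqrt sG, hbd⟩ hmem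
end

section
/- Let p ≥ 1, let W ∈ ℝ^{p×p} with 0 < W_{ij} ≤ 1 for all (i,j), let ε > 0, and let 𝒢 be a partition of {1,…,p}×{1,…,p} into groups. Let S_E be a set of s_E index pairs and let T ⊆ 𝒢 be a set of s_G groups. Then for every u ∈ ℝ^{p×p} supported on S_E and every v ∈ ℝ^{p×p} supported on the union of the groups in T, the kEV norm satisfies ‖W ∘ u‖₁ + ε‖v‖_{𝒢,2} ≤ √(s_E + ε² s_G) · √( ‖u‖_F² + ‖v‖_F² ). -/
open Finset

/-- The squared Frobenius norm `‖X‖_F² = Σ_{i,j} X_{ij}²`. -/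
def frobSq {p : ℕ} (X : Matrix (Fin p) (Fin p) ℝ) : ℝ :=
  ∑ i, ∑ j, (X i j) ^ 2

private lemma cs2 {a b x y : ℝ} (ha : 0 ≤ a) (hb : 0 ≤ b) (hx : 0 ≤ x) (hy : 0 ≤ y) :
    a * x + b * y ≤ Real.sqrt (a ^ 2 + b ^ 2) * Real.sqrt (x ^ 2 + y ^ 2) := by
  rw [← Real.sqrt_mul (by positivity)]
  rw [Real.le_sqrt (by positivity)]
  · nlinarith [sq_nonneg (a * y - b * x)]
  · positivity

private lemma sum_le_sqrt_card {α : Type*} (s : Finset α) (f : α → ℝ) (hf : ∀ a ∈ s, 0 ≤ f a) :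
    ∑ a ∈ s, f a ≤ Real.sqrt s.card * Real.sqrt (∑ a ∈ s, f a ^ 2) := by
  rw [← Real.sqrt_mul (by positivity)]
  rw [Real.le_sqrt (Finset.sum_nonneg hf)]
  · exact_mod_cast sq_sum_le_card_mul_sum_sq (s := s) (f := f)
  · positivity

/-- Subspace compatibility bound for the kEV norm: if `0 < W_{ij} ≤ 1`, `u` is supported
on a set `S_E` of `s_E` index pairs and `v` is supported on the union of the `s_G` groups
in `T`, then `‖W ∘ u‖₁ + ε‖v‖_{𝒢,2} ≤ √(s_E + ε² s_G) * √(‖u‖_F² + ‖v‖_F²)`. -/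
theorem stmt10 (p : ℕ) (hp : 1 ≤ p) {ι : Type*} [Fintype ι] [DecidableEq ι]
    (W : Matrix (Fin p) (Fin p) ℝ) (hW : ∀ i j, 0 < W i j ∧ W i j ≤ 1)
    (ε : ℝ) (hε : 0 < ε)
    (gr : Fin p × Fin p → ι)
    (SE : Finset (Fin p × Fin p)) (sE : ℕ) (hsE : sE = SE.card)
    (T : Finset ι) (sG : ℕ) (hsG : sG = T.card)
    (u v : Matrix (Fin p) (Fin p) ℝ)
    (hu : ∀ ij : Fin p × Fin p, ij ∉ SE → u ij.1 ij.2 = 0)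
    (hv : ∀ ij : Fin p × Fin p, gr ij ∉ T → v ij.1 ij.2 = 0) :
    weightedL1 W u + ε * groupNorm gr v ≤
      Real.sqrt ((sE : ℝ) + ε ^ 2 * (sG : ℝ)) * Real.sqrt (frobSq u + frobSq v) := by
  -- Step 1: weightedL1 ≤ √sE * √(frobSq u)
  have hfu : frobSq u = ∑ ij : Fin p × Fin p, (u ij.1 ij.2) ^ 2 := by
    rw [frobSq, ← Finset.sum_product']; rfl
  have hfv : frobSq v = ∑ ij : Fin p × Fin p, (v ij.1 ij.2) ^ 2 := by
    rw [frobSq, ← Finset.sum_product']; rfl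
  have h1 : weightedL1 W u ≤ Real.sqrt sE * Real.sqrt (frobSq u) := by
    have e1 : weightedL1 W u = ∑ ij : Fin p × Fin p, |W ij.1 ij.2 * u ij.1 ij.2| := by
      rw [weightedL1, ← Finset.sum_product']; rfl
    have e2 : ∑ ij : Fin p × Fin p, |W ij.1 ij.2 * u ij.1 ij.2|
        = ∑ ij ∈ SE, |W ij.1 ij.2 * u ij.1 ij.2| := by
      refine (Finset.sum_subset (Finset.subset_univ _) ?_).symm
      intro ij _ hij
      rw [hu ij hij, mul_zero, abs_zero]
    have e3 : ∑ ij ∈ SE, |W ij.1 ij.2 * u ij.1 ij.2| ≤ ∑ ij ∈ SE, |u ij.1 ij.2| := by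
      refine Finset.sum_le_sum fun ij _ => ?_
      rw [abs_mul]
      calc |W ij.1 ij.2| * |u ij.1 ij.2| ≤ 1 * |u ij.1 ij.2| := by
            apply mul_le_mul_of_nonneg_right _ (abs_nonneg _)
            rw [abs_of_pos (hW ij.1 ij.2).1]; exact (hW ij.1 ij.2).2
        _ = |u ij.1 ij.2| := one_mul _
    have e4 := sum_le_sqrt_card SE (fun ij => |u ij.1 ij.2|) (fun a _ => abs_nonneg _)
    simp only [sq_abs] at e4
    have e5 : ∑ ij ∈ SE, (u ij.1 ij.2) ^ 2 ≤ frobSq u := by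
      rw [hfu]
      exact Finset.sum_le_sum_of_subset_of_nonneg (Finset.subset_univ _)
        (fun _ _ _ => sq_nonneg _)
    calc weightedL1 W u ≤ ∑ ij ∈ SE, |u ij.1 ij.2| := by rw [e1, e2]; exact e3
      _ ≤ Real.sqrt SE.card * Real.sqrt (∑ ij ∈ SE, (u ij.1 ij.2) ^ 2) := e4
      _ ≤ Real.sqrt sE * Real.sqrt (frobSq u) := by
          rw [hsE]
          exact mul_le_mul_of_nonneg_left (Real.sqrt_le_sqrt e5) (Real.sqrt_nonneg _)
  -- Step 2: groupNorm ≤ √sG * √(frobSq v)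
  have h2 : groupNorm gr v ≤ Real.sqrt sG * Real.sqrt (frobSq v) := by
    have e2 : groupNorm gr v
        = ∑ k ∈ T, Real.sqrt (∑ ij ∈ Finset.univ.filter (fun ij => gr ij = k),
            (v ij.1 ij.2) ^ 2) := by
      refine (Finset.sum_subset (Finset.subset_univ _) ?_).symm
      intro k _ hk
      have : ∀ ij ∈ Finset.univ.filter (fun ij => gr ij = k), (v ij.1 ij.2) ^ 2 = 0 := by
        intro ij hij
        rw [Finset.mem_filter] at hij
        rw [hv ij (hij.2 ▸ hk)]; ring
      rw [Finset.sum_eq_zero this, Real.sqrt_zero]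
    have e4 := sum_le_sqrt_card T
      (fun k => Real.sqrt (∑ ij ∈ Finset.univ.filter (fun ij => gr ij = k), (v ij.1 ij.2) ^ 2))
      (fun a _ => Real.sqrt_nonneg _)
    have e5 : ∑ k ∈ T, (Real.sqrt (∑ ij ∈ Finset.univ.filter (fun ij => gr ij = k),
        (v ij.1 ij.2) ^ 2)) ^ 2 ≤ frobSq v := by
      have : ∀ k ∈ T, (Real.sqrt (∑ ij ∈ Finset.univ.filter (fun ij => gr ij = k),
          (v ij.1 ij.2) ^ 2)) ^ 2
          = ∑ ij ∈ Finset.univ.filter (fun ij => gr ij = k), (v ij.1 ij.2) ^ 2 := by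
        intro k _
        exact Real.sq_sqrt (Finset.sum_nonneg fun _ _ => sq_nonneg _)
      rw [Finset.sum_congr rfl this, hfv]
      calc ∑ k ∈ T, ∑ ij ∈ Finset.univ.filter (fun ij => gr ij = k), (v ij.1 ij.2) ^ 2
          ≤ ∑ k : ι, ∑ ij ∈ Finset.univ.filter (fun ij => gr ij = k), (v ij.1 ij.2) ^ 2 :=
            Finset.sum_le_sum_of_subset_of_nonneg (Finset.subset_univ _)
              (fun _ _ _ => Finset.sum_nonneg fun _ _ => sq_nonneg _)
        _ = ∑ ij : Fin p × Fin p, (v ij.1 ij.2) ^ 2 :=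
            Finset.sum_fiberwise _ _ _
    calc groupNorm gr v
        ≤ Real.sqrt T.card * Real.sqrt (∑ k ∈ T, (Real.sqrt (∑ ij ∈ Finset.univ.filter
            (fun ij => gr ij = k), (v ij.1 ij.2) ^ 2)) ^ 2) := by rw [e2]; exact e4
      _ ≤ Real.sqrt sG * Real.sqrt (frobSq v) := by
          rw [hsG]
          exact mul_le_mul_of_nonneg_left (Real.sqrt_le_sqrt e5) (Real.sqrt_nonneg _)
  -- Step 3: combine via 2D Cauchy-Schwarz
  have h3 : Real.sqrt sE * Real.sqrt (frobSq u) + (ε * Real.sqrt sG) * Real.sqrt (frobSq v)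
      ≤ Real.sqrt ((sE : ℝ) + ε ^ 2 * sG) * Real.sqrt (frobSq u + frobSq v) := by
    have hfu0 : 0 ≤ frobSq u := by rw [hfu]; positivity
    have hfv0 : 0 ≤ frobSq v := by rw [hfv]; positivity
    have := cs2 (a := Real.sqrt sE) (b := ε * Real.sqrt sG)
      (x := Real.sqrt (frobSq u)) (y := Real.sqrt (frobSq v))
      (Real.sqrt_nonneg _) (by positivity) (Real.sqrt_nonneg _) (Real.sqrt_nonneg _)
    have es : (Real.sqrt sE) ^ 2 + (ε * Real.sqrt sG) ^ 2 = (sE : ℝ) + ε ^ 2 * sG := by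
      rw [mul_pow, Real.sq_sqrt (Nat.cast_nonneg _), Real.sq_sqrt (Nat.cast_nonneg _)]
    have ex : (Real.sqrt (frobSq u)) ^ 2 + (Real.sqrt (frobSq v)) ^ 2
        = frobSq u + frobSq v := by
      rw [Real.sq_sqrt hfu0, Real.sq_sqrt hfv0]
    rwa [es, ex] at this
  calc weightedL1 W u + ε * groupNorm gr v
      ≤ Real.sqrt sE * Real.sqrt (frobSq u) + (ε * Real.sqrt sG) * Real.sqrt (frobSq v) := by
        have : ε * groupNorm gr v ≤ ε * (Real.sqrt sG * Real.sqrt (frobSq v)) :=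
          mul_le_mul_of_nonneg_left h2 hε.le
        linarith [this, h1]
    _ ≤ _ := h3
end

section
/- Let n ≥ 1, let 𝒢 be a partition of {1,…,n} into nonempty groups, let a ∈ ℝⁿ, and let λ > 0. Define Δ̂ ∈ ℝⁿ groupwise by Δ̂_g = max(‖a_g‖₂ − λ, 0) · a_g / ‖a_g‖₂ when a_g ≠ 0 and Δ̂_g = 0 when a_g = 0. Then Δ̂ is a minimizer of the group (1,2)-norm Σ_{g ∈ 𝒢} ‖Δ_g‖₂ over the feasible set { Δ ∈ ℝⁿ : ‖Δ_g − a_g‖₂ ≤ λ for every g ∈ 𝒢 }. -/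
/-!
Restricted to a group, `Δ̂` is the soft threshold of `a_g`: it moves `a_g` towards the origin
by `min(λ, ‖a_g‖₂)`, so it is feasible and has norm `(‖a_g‖₂ − λ)₊`. By the reverse triangle
inequality every feasible `Δ` has `‖Δ_g‖₂ ≥ ‖a_g‖₂ − λ`, so `Δ̂` minimizes each summand of the
objective separately.
-/

open Finset

noncomputable def groupEuc {n : ℕ} {ι : Type*} [Fintype ι] [DecidableEq ι]
    (gr : Fin n → ι) (u : Fin n → ℝ) (k : ι) : ℝ :=
  Real.sqrt (∑ i ∈ Finset.univ.filter (fun i => gr i = k), (u i) ^ 2)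

section SoftThreshold

variable {E : Type*} [SeminormedAddCommGroup E] {lam : ℝ}

theorem max_sub_div_norm_mul_norm (hlam : 0 ≤ lam) (x : E) :
    max (‖x‖ - lam) 0 / ‖x‖ * ‖x‖ = max (‖x‖ - lam) 0 := by
  rcases eq_or_ne ‖x‖ 0 with hx | hx
  · simp [hx, hlam]
  · exact div_mul_cancel₀ _ hx

theorem max_norm_sub_le_norm_of_norm_sub_le {x y : E} (hxy : ‖y - x‖ ≤ lam) :
    max (‖x‖ - lam) 0 ≤ ‖y‖ :=
  max_le (by linarith [norm_sub_norm_le x y, norm_sub_rev x y]) (norm_nonneg y)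

variable [NormedSpace ℝ E]

/-- At `x = 0` the coefficient is `_ / 0 = 0`, matching the convention `Δ̂_g = 0` when `a_g = 0`. -/
noncomputable def softThreshold (lam : ℝ) (x : E) : E :=
  (max (‖x‖ - lam) 0 / ‖x‖) • x

theorem norm_softThreshold (hlam : 0 ≤ lam) (x : E) :
    ‖softThreshold lam x‖ = max (‖x‖ - lam) 0 := by
  rw [softThreshold, norm_smul, Real.norm_of_nonneg (by positivity),
    max_sub_div_norm_mul_norm hlam]

theorem norm_softThreshold_sub_le (hlam : 0 ≤ lam) (x : E) :
    ‖softThreshold lam x - x‖ ≤ lam := by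
  set c := max (‖x‖ - lam) 0 / ‖x‖
  have hnorm : ‖softThreshold lam x - x‖ = |max (‖x‖ - lam) 0 - ‖x‖| :=
    calc ‖c • x - x‖ = ‖(c - 1) • x‖ := by rw [sub_smul, one_smul]
      _ = |(c - 1) * ‖x‖| := by rw [norm_smul, Real.norm_eq_abs, abs_mul, abs_norm]
      _ = |max (‖x‖ - lam) 0 - ‖x‖| := by rw [sub_one_mul, max_sub_div_norm_mul_norm hlam]
  have hmax : max (‖x‖ - lam) 0 ≤ ‖x‖ + lam := max_le (by linarith) (by positivity)
  rw [hnorm, abs_le]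
  exact ⟨by linarith [le_max_left (‖x‖ - lam) 0], by linarith⟩

end SoftThreshold

section Groups

variable {n : ℕ} {ι : Type*}

noncomputable def groupVec (gr : Fin n → ι) (u : Fin n → ℝ) (k : ι) :
    EuclideanSpace ℝ {i : Fin n // gr i = k} :=
  WithLp.toLp 2 fun j => u j

theorem groupEuc_eq_norm_groupVec [Fintype ι] [DecidableEq ι] (gr : Fin n → ι)
    (u : Fin n → ℝ) (k : ι) :
    groupEuc gr u k = ‖groupVec gr u k‖ := by
  rw [groupEuc, Finset.sum_subtype (F := inferInstance) _ (p := fun i => gr i = k) (by simp),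
    EuclideanSpace.norm_eq]
  simp [groupVec, Real.norm_eq_abs, sq_abs]

theorem groupVec_sub (gr : Fin n → ι) (u v : Fin n → ℝ) (k : ι) :
    groupVec gr (u - v) k = groupVec gr u k - groupVec gr v k :=
  rfl

theorem groupVec_groupwise_smul (gr : Fin n → ι) (c : ι → ℝ) (u : Fin n → ℝ) (k : ι) :
    groupVec gr (fun i => c (gr i) * u i) k = c k • groupVec gr u k := by
  ext j
  simp [groupVec, j.2]

end Groups

theorem ite_eq_zero_else_mul_div (r m x : ℝ) :
    (if r = 0 then 0 else m * x / r) = m / r * x := by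
  split_ifs with hr
  · simp [hr]
  · ring

theorem stmt13_general (n : ℕ) {ι : Type*} [Fintype ι] [DecidableEq ι]
    (gr : Fin n → ι)
    (a : Fin n → ℝ) (lam : ℝ) (hlam : 0 < lam) :
    let Δhat : Fin n → ℝ := fun i =>
      if groupEuc gr a (gr i) = 0 then 0
      else max (groupEuc gr a (gr i) - lam) 0 * a i / groupEuc gr a (gr i)
    (∀ k : ι, groupEuc gr (Δhat - a) k ≤ lam) ∧
    (∀ Δ : Fin n → ℝ, (∀ k : ι, groupEuc gr (Δ - a) k ≤ lam) →
      ∑ k : ι, groupEuc gr Δhat k ≤ ∑ k : ι, groupEuc gr Δ k) := by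
  intro Δhat
  have hΔhat (k : ι) : groupVec gr Δhat k = softThreshold lam (groupVec gr a k) := by
    rw [softThreshold, ← groupEuc_eq_norm_groupVec]
    refine .trans ?_ (groupVec_groupwise_smul gr
      (fun k => max (groupEuc gr a k - lam) 0 / groupEuc gr a k) a k)
    simp only [Δhat, ite_eq_zero_else_mul_div]
  simp only [groupEuc_eq_norm_groupVec, groupVec_sub, hΔhat]
  refine ⟨fun k => norm_softThreshold_sub_le hlam.le _, fun Δ hfeas => ?_⟩
  refine Finset.sum_le_sum fun k _ => ?_
  rw [norm_softThreshold hlam.le]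
  exact max_norm_sub_le_norm_of_norm_sub_le (hfeas k)

/-- The groupwise soft-thresholding vector
`Δ̂_g = max(‖a_g‖₂ − λ, 0)·a_g/‖a_g‖₂` (and `Δ̂_g = 0` when `a_g = 0`) minimizes the
group (1,2)-norm `Σ_{g ∈ 𝒢} ‖Δ_g‖₂` over the feasible set
`{Δ : ‖Δ_g − a_g‖₂ ≤ λ for every g ∈ 𝒢}`, 𝒢 being a partition of `{1,…,n}` into
nonempty groups (the group-assignment map `gr` is surjective). -/
theorem stmt13 (n : ℕ) (hn : 1 ≤ n) {ι : Type*} [Fintype ι] [DecidableEq ι]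
    (gr : Fin n → ι) (hgr : Function.Surjective gr)
    (a : Fin n → ℝ) (lam : ℝ) (hlam : 0 < lam) :
    let Δhat : Fin n → ℝ := fun i =>
      if groupEuc gr a (gr i) = 0 then 0
      else max (groupEuc gr a (gr i) - lam) 0 * a i / groupEuc gr a (gr i)
    (∀ k : ι, groupEuc gr (Δhat - a) k ≤ lam) ∧
    (∀ Δ : Fin n → ℝ, (∀ k : ι, groupEuc gr (Δ - a) k ≤ lam) →
      ∑ k : ι, groupEuc gr Δhat k ≤ ∑ k : ι, groupEuc gr Δ k) :=
  stmt13_general n gr a lam hlam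
end
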